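/- Let T be a locally satisfiable negative local theory and M a local positively closed model of T such that every ball in a single sort of M is compact in the local positive logic topology. Then M is a retractor of T. -/

import Mathlib

noncomputable section

structure LocalLanguage : Type 1 where
  Sorts : Type
  Rel : (n : ℕ) → (Fin n → Sorts) → Type
  Const : Sorts → Type
  Loc : Sorts → Type
  locToRel : {s : Sorts} → Loc s → Rel 2 ![s, s]
  dd0 : (s : Sorts) → Loc s
  locMul : {s : Sorts} → Loc s → Loc s → Loc s
  locLe : {s : Sorts} → Loc s → Loc s → Prop
  locMul_assoc : ∀ {s} (d₁ d₂ d₃ : Loc s), locMul (locMul d₁ d₂) d₃ = locMul d₁ (locMul d₂ d₃)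
  dd0_locMul : ∀ {s} (d : Loc s), locMul (dd0 s) d = d
  locMul_dd0 : ∀ {s} (d : Loc s), locMul d (dd0 s) = d
  locLe_refl : ∀ {s} (d : Loc s), locLe d d
  locLe_trans : ∀ {s} (d₁ d₂ d₃ : Loc s), locLe d₁ d₂ → locLe d₂ d₃ → locLe d₁ d₃
  locLe_antisymm : ∀ {s} (d₁ d₂ : Loc s), locLe d₁ d₂ → locLe d₂ d₁ → d₁ = d₂
  dd0_locLe : ∀ {s} (d : Loc s), locLe (dd0 s) d
  locMul_mono : ∀ {s} (d₁ d₂ e₁ e₂ : Loc s), locLe d₁ e₁ → locLe d₂ e₂ →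
    locLe (locMul d₁ d₂) (locMul e₁ e₂)
  bound : {s : Sorts} → Const s → Const s → Loc s

structure LStructure (L : LocalLanguage) : Type 1 where
  Dom : L.Sorts → Type
  relMap : {n : ℕ} → {ρ : Fin n → L.Sorts} → L.Rel n ρ → ((i : Fin n) → Dom (ρ i)) → Prop
  constMap : {s : L.Sorts} → L.Const s → Dom s

def dpair {C : Fin 2 → Sort*} (a : C 0) (b : C 1) : (i : Fin 2) → C i
  | ⟨0, _⟩ => a
  | ⟨1, _⟩ => b

def LStructure.locRel {L : LocalLanguage} (M : LStructure L) {s : L.Sorts}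
    (d : L.Loc s) (a b : M.Dom s) : Prop :=
  M.relMap (L.locToRel d) (dpair a b)

structure IsLocal {L : LocalLanguage} (M : LStructure L) : Prop where
  symm : ∀ {s : L.Sorts} (d : L.Loc s) (a b : M.Dom s), M.locRel d a b → M.locRel d b a
  mono : ∀ {s : L.Sorts} (d₁ d₂ : L.Loc s), L.locLe d₁ d₂ →
    ∀ (a b : M.Dom s), M.locRel d₁ a b → M.locRel d₂ a b
  comp : ∀ {s : L.Sorts} (d₁ d₂ : L.Loc s) (a b c : M.Dom s),
    M.locRel d₁ a b → M.locRel d₂ b c → M.locRel (L.locMul d₁ d₂) a c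
  boundAx : ∀ {s : L.Sorts} (c₁ c₂ : L.Const s),
    M.locRel (L.bound c₁ c₂) (M.constMap c₁) (M.constMap c₂)
  total : ∀ {s : L.Sorts} (a b : M.Dom s), ∃ d : L.Loc s, M.locRel d a b
  dd0_eq : ∀ {s : L.Sorts} (a b : M.Dom s), M.locRel (L.dd0 s) a b ↔ a = b

/-! ## Syntax -/

/-- Terms: variables or constants (the language is relational). -/
inductive LTerm (L : LocalLanguage) (α : Type) (σ : α → L.Sorts) : L.Sorts → Type
  | var (a : α) : LTerm L α σ (σ a)
  | const {s : L.Sorts} (c : L.Const s) : LTerm L α σ s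

/-- Sort assignment for a context extended by one variable of sort `s`. -/
abbrev osort {L : LocalLanguage} {α : Type} (s : L.Sorts) (σ : α → L.Sorts) :
    Option α → L.Sorts :=
  fun o => Option.elim o s σ

/-- Positive formulas: atomic, conjunction, disjunction, existential quantification. -/
inductive PosForm (L : LocalLanguage) : (α : Type) → (α → L.Sorts) → Type 1
  | rel {α : Type} {σ : α → L.Sorts} {n : ℕ} {ρ : Fin n → L.Sorts}
      (R : L.Rel n ρ) (ts : (i : Fin n) → LTerm L α σ (ρ i)) : PosForm L α σ
  | and {α : Type} {σ : α → L.Sorts} (φ ψ : PosForm L α σ) : PosForm L α σ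
  | or {α : Type} {σ : α → L.Sorts} (φ ψ : PosForm L α σ) : PosForm L α σ
  | ex {α : Type} {σ : α → L.Sorts} (s : L.Sorts)
      (φ : PosForm L (Option α) (osort s σ)) : PosForm L α σ

/-- Local positive formulas: atomic, conjunction, disjunction, local existential
quantification `∃ x ∈ d(t) φ`. -/
inductive LPosForm (L : LocalLanguage) : (α : Type) → (α → L.Sorts) → Type 1
  | rel {α : Type} {σ : α → L.Sorts} {n : ℕ} {ρ : Fin n → L.Sorts}
      (R : L.Rel n ρ) (ts : (i : Fin n) → LTerm L α σ (ρ i)) : LPosForm L α σ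
  | and {α : Type} {σ : α → L.Sorts} (φ ψ : LPosForm L α σ) : LPosForm L α σ
  | or {α : Type} {σ : α → L.Sorts} (φ ψ : LPosForm L α σ) : LPosForm L α σ
  | lex {α : Type} {σ : α → L.Sorts} (s : L.Sorts) (d : L.Loc s) (t : LTerm L α σ s)
      (φ : LPosForm L (Option α) (osort s σ)) : LPosForm L α σ

/-- Local formulas: atomic, negation, conjunction, local existential quantification. -/
inductive LForm (L : LocalLanguage) : (α : Type) → (α → L.Sorts) → Type 1
  | rel {α : Type} {σ : α → L.Sorts} {n : ℕ} {ρ : Fin n → L.Sorts}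
      (R : L.Rel n ρ) (ts : (i : Fin n) → LTerm L α σ (ρ i)) : LForm L α σ
  | not {α : Type} {σ : α → L.Sorts} (φ : LForm L α σ) : LForm L α σ
  | and {α : Type} {σ : α → L.Sorts} (φ ψ : LForm L α σ) : LForm L α σ
  | lex {α : Type} {σ : α → L.Sorts} (s : L.Sorts) (d : L.Loc s) (t : LTerm L α σ s)
      (φ : LForm L (Option α) (osort s σ)) : LForm L α σ

/-! ## Semantics -/

def LTerm.realize {L : LocalLanguage} (M : LStructure L) {α : Type} {σ : α → L.Sorts}
    (v : (a : α) → M.Dom (σ a)) : {s : L.Sorts} → LTerm L α σ s → M.Dom s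
  | _, .var a => v a
  | _, .const c => M.constMap c

/-- Extension of a valuation by a value for the new variable. -/
def vcons {L : LocalLanguage} {M : LStructure L} {α : Type} {σ : α → L.Sorts} {s : L.Sorts}
    (x : M.Dom s) (v : (a : α) → M.Dom (σ a)) : (o : Option α) → M.Dom (osort s σ o)
  | none => x
  | some a => v a

def PosForm.Realize {L : LocalLanguage} (M : LStructure L) :
    {α : Type} → {σ : α → L.Sorts} → PosForm L α σ → ((a : α) → M.Dom (σ a)) → Prop
  | _, _, .rel R ts, v => M.relMap R (fun i => (ts i).realize M v)
  | _, _, .and φ ψ, v => φ.Realize M v ∧ ψ.Realize M v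
  | _, _, .or φ ψ, v => φ.Realize M v ∨ ψ.Realize M v
  | _, _, .ex s φ, v => ∃ x : M.Dom s, φ.Realize M (vcons x v)

def LPosForm.Realize {L : LocalLanguage} (M : LStructure L) :
    {α : Type} → {σ : α → L.Sorts} → LPosForm L α σ → ((a : α) → M.Dom (σ a)) → Prop
  | _, _, .rel R ts, v => M.relMap R (fun i => (ts i).realize M v)
  | _, _, .and φ ψ, v => φ.Realize M v ∧ ψ.Realize M v
  | _, _, .or φ ψ, v => φ.Realize M v ∨ ψ.Realize M v
  | _, _, .lex s d t φ, v =>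
      ∃ x : M.Dom s, M.locRel d x (t.realize M v) ∧ φ.Realize M (vcons x v)

def LForm.Realize {L : LocalLanguage} (M : LStructure L) :
    {α : Type} → {σ : α → L.Sorts} → LForm L α σ → ((a : α) → M.Dom (σ a)) → Prop
  | _, _, .rel R ts, v => M.relMap R (fun i => (ts i).realize M v)
  | _, _, .not φ, v => ¬ φ.Realize M v
  | _, _, .and φ ψ, v => φ.Realize M v ∧ ψ.Realize M v
  | _, _, .lex s d t φ, v =>
      ∃ x : M.Dom s, M.locRel d x (t.realize M v) ∧ φ.Realize M (vcons x v)

/-- Quantifier-free positive formulas. -/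
inductive PosForm.IsQF {L : LocalLanguage} : {α : Type} → {σ : α → L.Sorts} → PosForm L α σ → Prop
  | rel {α : Type} {σ : α → L.Sorts} {n : ℕ} {ρ : Fin n → L.Sorts}
      (R : L.Rel n ρ) (ts : (i : Fin n) → LTerm L α σ (ρ i)) : PosForm.IsQF (.rel R ts)
  | and {α : Type} {σ : α → L.Sorts} {φ ψ : PosForm L α σ} :
      PosForm.IsQF φ → PosForm.IsQF ψ → PosForm.IsQF (.and φ ψ)
  | or {α : Type} {σ : α → L.Sorts} {φ ψ : PosForm L α σ} :
      PosForm.IsQF φ → PosForm.IsQF ψ → PosForm.IsQF (.or φ ψ)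


/-! ## Sentences, theories, models -/

/-- Sort assignment for the empty context. -/
abbrev emptySorts (L : LocalLanguage) : Empty → L.Sorts := fun e => e.elim

/-- Positive sentences. -/
abbrev PosSentence (L : LocalLanguage) := PosForm L Empty (emptySorts L)

/-- A positive sentence holds in a structure. -/
def PosSentence.RealizedIn {L : LocalLanguage} (φ : PosSentence L) (M : LStructure L) : Prop :=
  φ.Realize M (fun e => e.elim)

/-- We represent a negative theory by the set of positive sentences whose negations
belong to it.  `M` is a local model of `T` if `M` is local and satisfies the negation of
every positive sentence in `T`. -/
def LocalModel {L : LocalLanguage} (M : LStructure L) (T : Set (PosSentence L)) : Prop :=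
  IsLocal M ∧ ∀ φ ∈ T, ¬ φ.RealizedIn M

/-- `T` (a set of positive sentences standing for the negative theory `{¬φ : φ ∈ T}`)
is a negative local theory if it is closed under local implication: any negative sentence
true in every local model of `T` is already in `T`. -/
def IsNegLocalTheory {L : LocalLanguage} (T : Set (PosSentence L)) : Prop :=
  ∀ φ : PosSentence L, (∀ M : LStructure L, LocalModel M T → ¬ φ.RealizedIn M) → φ ∈ T

/-- `T` is locally satisfiable: it has a local model. -/
def LocSat {L : LocalLanguage} (T : Set (PosSentence L)) : Prop :=
  ∃ M : LStructure L, LocalModel M T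

/-- The negative theory of a structure (as the set of positive sentences failing in it). -/
def ThNeg {L : LocalLanguage} (M : LStructure L) : Set (PosSentence L) :=
  {φ | ¬ φ.RealizedIn M}

/-! ## Homomorphisms -/

structure LHom {L : LocalLanguage} (M N : LStructure L) where
  toFun : (s : L.Sorts) → M.Dom s → N.Dom s
  map_rel : ∀ {n : ℕ} {ρ : Fin n → L.Sorts} (R : L.Rel n ρ) (x : (i : Fin n) → M.Dom (ρ i)),
    M.relMap R x → N.relMap R (fun i => toFun (ρ i) (x i))
  map_const : ∀ {s : L.Sorts} (c : L.Const s), toFun s (M.constMap c) = N.constMap c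

def LHom.comp {L : LocalLanguage} {M N P : LStructure L} (g : LHom N P) (f : LHom M N) :
    LHom M P where
  toFun s := g.toFun s ∘ f.toFun s
  map_rel R x h := g.map_rel R _ (f.map_rel R x h)
  map_const c := by
    simp only [Function.comp_apply, f.map_const, g.map_const]

def LHom.id {L : LocalLanguage} (M : LStructure L) : LHom M M where
  toFun _ := fun x => x
  map_rel _ _ h := h
  map_const _ := rfl

/-- A homomorphism is a positive embedding if it reflects all positive formulas. -/
def LHom.IsPosEmbedding {L : LocalLanguage} {M N : LStructure L} (h : LHom M N) : Prop :=
  ∀ (α : Type) (σ : α → L.Sorts) (φ : PosForm L α σ) (v : (a : α) → M.Dom (σ a)),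
    φ.Realize N (fun a => h.toFun (σ a) (v a)) → φ.Realize M v

/-- A local positively closed model of `T`. -/
def IsPC {L : LocalLanguage} (M : LStructure L) (T : Set (PosSentence L)) : Prop :=
  LocalModel M T ∧
    ∀ (N : LStructure L) (h : LHom M N), LocalModel N T → h.IsPosEmbedding

/-- An endomorphism is an automorphism if it has a two-sided inverse homomorphism. -/
def LHom.IsAuto {L : LocalLanguage} {M : LStructure L} (f : LHom M M) : Prop :=
  ∃ g : LHom M M, g.comp f = LHom.id M ∧ f.comp g = LHom.id M

/-- Isomorphism of structures. -/
def Isomorphic {L : LocalLanguage} (M N : LStructure L) : Prop :=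
  ∃ (f : LHom M N) (g : LHom N M), g.comp f = LHom.id M ∧ f.comp g = LHom.id N

/-! ## Types -/

/-- The local positive type of a tuple. -/
def ltp {L : LocalLanguage} (M : LStructure L) {α : Type} {σ : α → L.Sorts}
    (v : (a : α) → M.Dom (σ a)) : Set (LPosForm L α σ) :=
  {φ | φ.Realize M v}

/-- The positive type of a tuple. -/
def ptp {L : LocalLanguage} (M : LStructure L) {α : Type} {σ : α → L.Sorts}
    (v : (a : α) → M.Dom (σ a)) : Set (PosForm L α σ) :=
  {φ | φ.Realize M v}

/-- A partial local positive type of `T` on `(α, σ)`: a set of local positive formulas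
realized by some tuple in some local model of `T`. -/
def IsPartialLType {L : LocalLanguage} (T : Set (PosSentence L)) {α : Type}
    {σ : α → L.Sorts} (Γ : Set (LPosForm L α σ)) : Prop :=
  ∃ (M : LStructure L) (v : (a : α) → M.Dom (σ a)),
    LocalModel M T ∧ ∀ φ ∈ Γ, LPosForm.Realize M φ v

/-- A local positive type: a maximal partial local positive type. -/
def IsLType {L : LocalLanguage} (T : Set (PosSentence L)) {α : Type}
    {σ : α → L.Sorts} (Γ : Set (LPosForm L α σ)) : Prop :=
  IsPartialLType T Γ ∧ ∀ Γ' : Set (LPosForm L α σ), IsPartialLType T Γ' → Γ ⊆ Γ' → Γ' = Γ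

/-- A variable `(α, σ)` is pointed if every sort not occurring among its sorts carries a
constant symbol. -/
def VPointed {L : LocalLanguage} {α : Type} (σ : α → L.Sorts) : Prop :=
  ∀ s : L.Sorts, s ∉ Set.range σ → Nonempty (L.Const s)


/-! ## Bounds and bounded satisfiability -/

/-- Pair of terms as arguments for a binary relation symbol. -/
def tpair {L : LocalLanguage} {α : Type} {σ : α → L.Sorts} {s t : L.Sorts}
    (t₁ : LTerm L α σ s) (t₂ : LTerm L α σ t) : (i : Fin 2) → LTerm L α σ (![s, t] i) :=
  dpair t₁ t₂

/-- A bound of the variable `(α, σ)`: a choice, for every single variable whose sort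
carries a constant symbol, of a locality relation and a constant, and for every pair of
single variables of the same sort, of a locality relation. -/
structure VBound (L : LocalLanguage) (α : Type) (σ : α → L.Sorts) where
  dConst : (a : α) → Nonempty (L.Const (σ a)) → L.Loc (σ a)
  cConst : (a : α) → Nonempty (L.Const (σ a)) → L.Const (σ a)
  dPair : (a b : α) → σ a = σ b → L.Loc (σ a)

/-- The set of (atomic, quantifier-free) local positive formulas making up a bound:
`d_a(x_a, c_a)` and `d_{a,b}(x_a, x_b)`. -/
def VBound.toSet {L : LocalLanguage} {α : Type} {σ : α → L.Sorts} (B : VBound L α σ) :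
    Set (LPosForm L α σ) :=
  {φ | (∃ (a : α) (h : Nonempty (L.Const (σ a))),
          φ = LPosForm.rel (L.locToRel (B.dConst a h))
                (tpair (LTerm.var a) (LTerm.const (B.cConst a h)))) ∨
       (∃ (a b : α) (e : σ a = σ b),
          φ = LPosForm.rel (L.locToRel (B.dPair a b e))
                (tpair (LTerm.var a) (e.symm ▸ LTerm.var b)))}

/-- A bound holds of a tuple if all its formulas do. -/
def VBound.Holds {L : LocalLanguage} {α : Type} {σ : α → L.Sorts} (B : VBound L α σ)
    (M : LStructure L) (v : (a : α) → M.Dom (σ a)) : Prop :=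
  ∀ ψ ∈ B.toSet, LPosForm.Realize M ψ v

/-- Finite local satisfiability of a set of local positive formulas in `T`. -/
def FinLocSat {L : LocalLanguage} (T : Set (PosSentence L)) {α : Type} {σ : α → L.Sorts}
    (Δ : Set (LPosForm L α σ)) : Prop :=
  ∀ Δ₀ ⊆ Δ, Δ₀.Finite →
    ∃ (M : LStructure L) (v : (a : α) → M.Dom (σ a)),
      LocalModel M T ∧ ∀ φ ∈ Δ₀, LPosForm.Realize M φ v

/-- Bounded satisfiability: for some bound `B`, `Γ ∪ B` is finitely locally satisfiable. -/
def BoundedlySat {L : LocalLanguage} (T : Set (PosSentence L)) {α : Type}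
    {σ : α → L.Sorts} (Γ : Set (LPosForm L α σ)) : Prop :=
  ∃ B : VBound L α σ, FinLocSat T (Γ ∪ B.toSet)

/-! ## Π₁-local formulas -/

/-- Dependent `Sum.elim` of valuations. -/
def sval {L : LocalLanguage} {M : LStructure L} {α β : Type} {σ : α → L.Sorts}
    {τ : β → L.Sorts} (v : (a : α) → M.Dom (σ a)) (w : (b : β) → M.Dom (τ b)) :
    (x : α ⊕ β) → M.Dom (Sum.elim σ τ x)
  | .inl a => v a
  | .inr b => w b

/-- A Π₁-local formula: a universally quantified local formula. -/
structure Pi1LForm (L : LocalLanguage) (α : Type) (σ : α → L.Sorts) : Type 1 where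
  n : ℕ
  τ : Fin n → L.Sorts
  matrix : LForm L (α ⊕ Fin n) (Sum.elim σ τ)

def Pi1LForm.Realize {L : LocalLanguage} {α : Type} {σ : α → L.Sorts}
    (φ : Pi1LForm L α σ) (M : LStructure L) (v : (a : α) → M.Dom (σ a)) : Prop :=
  ∀ w : (i : Fin φ.n) → M.Dom (φ.τ i), φ.matrix.Realize M (sval v w)

/-- Bounded satisfiability of a set of Π₁-local formulas: for some bound `B`, every
finite subset of `Γ` together with every finite part of `B` is realized in a local
model of `T`. -/
def Pi1BoundedlySat {L : LocalLanguage} (T : Set (PosSentence L)) {α : Type}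
    {σ : α → L.Sorts} (Γ : Set (Pi1LForm L α σ)) : Prop :=
  ∃ B : VBound L α σ,
    ∀ Γ₀ ⊆ Γ, Γ₀.Finite → ∀ F ⊆ B.toSet, F.Finite →
      ∃ (M : LStructure L) (v : (a : α) → M.Dom (σ a)),
        LocalModel M T ∧ (∀ φ ∈ Γ₀, Pi1LForm.Realize φ M v) ∧
          (∀ ψ ∈ F, LPosForm.Realize M ψ v)

/-! ## Cardinality, homogeneity, retractors -/

/-- The cardinality of a structure: that of the disjoint union of its sorts. -/
def LStructure.card {L : LocalLanguage} (M : LStructure L) : Cardinal :=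
  Cardinal.mk (Σ s : L.Sorts, M.Dom s)

/-- The cardinality of a local language. -/
def LocalLanguage.card (L : LocalLanguage) : Cardinal :=
  max Cardinal.aleph0
    (Cardinal.mk (L.Sorts ⊕ (Σ s : L.Sorts, L.Const s) ⊕ (Σ s : L.Sorts, L.Loc s) ⊕
      (Σ (n : ℕ) (ρ : Fin n → L.Sorts), L.Rel n ρ)))

/-- `M` is a (local positively) κ-ultrahomogeneous model of `T`. -/
def IsUltrahomogeneous {L : LocalLanguage} (T : Set (PosSentence L)) (M : LStructure L)
    (κ : Cardinal) : Prop :=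
  ∀ A B : LStructure L, LocalModel A T → LocalModel B T → A.card < κ → B.card < κ →
    ∀ f : LHom A M, f.IsPosEmbedding → ∀ g : LHom A B, ∃ h : LHom B M, h.comp g = f

/-- A retractor of `T`: a local model of `T` such that every homomorphism into a local
model of `T` has a retraction. -/
def IsRetractor {L : LocalLanguage} (T : Set (PosSentence L)) (C : LStructure L) : Prop :=
  LocalModel C T ∧
    ∀ N : LStructure L, LocalModel N T →
      ∀ f : LHom C N, ∃ g : LHom N C, g.comp f = LHom.id C

/-- `M` is κ-universal for a class `K` of structures. -/
def IsUniversal {L : LocalLanguage} (M : LStructure L) (K : LStructure L → Prop)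
    (κ : Cardinal) : Prop :=
  ∀ N : LStructure L, K N → N.card < κ → Nonempty (LHom N M)

/-- `M` is absolutely universal for a class `K` of structures. -/
def IsAbsUniversal {L : LocalLanguage} (M : LStructure L) (K : LStructure L → Prop) : Prop :=
  ∀ N : LStructure L, K N → Nonempty (LHom N M)

/-- Compatibility of two local models of `T`. -/
def Compat {L : LocalLanguage} (T : Set (PosSentence L)) (A B : LStructure L) : Prop :=
  ∃ M : LStructure L, LocalModel M T ∧ Nonempty (LHom A M) ∧ Nonempty (LHom B M)

/-- The local joint (homomorphism) property. -/
def HasLJP {L : LocalLanguage} (T : Set (PosSentence L)) : Prop :=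
  ∀ A B : LStructure L, LocalModel A T → LocalModel B T →
    ∃ M : LStructure L, LocalModel M T ∧ Nonempty (LHom A M) ∧ Nonempty (LHom B M)


/-! ## Parameters -/

/-- A set of parameters in a structure. -/
def ParamSet {L : LocalLanguage} (M : LStructure L) := (s : L.Sorts) → Set (M.Dom s)

/-- Interpretation in `M` of old and new constants of the expanded language. -/
def paramInterp {L : LocalLanguage} (M : LStructure L) (A : ParamSet M) {s : L.Sorts} :
    L.Const s ⊕ (A s) → M.Dom s
  | .inl c => M.constMap c
  | .inr a => a.1

/-- The expansion `L(A)` of `L` by new constants for the parameters `A` of a local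
structure `M`; bounds for pairs involving the new constants are chosen (by locality
axiom (A5)) so that they hold in `M`. -/
noncomputable def LocalLanguage.withParams (L : LocalLanguage) (M : LStructure L)
    (hM : IsLocal M) (A : ParamSet M) : LocalLanguage where
  Sorts := L.Sorts
  Rel := L.Rel
  Const s := L.Const s ⊕ (A s)
  Loc := L.Loc
  locToRel := L.locToRel
  dd0 := L.dd0
  locMul := L.locMul
  locLe := L.locLe
  locMul_assoc := L.locMul_assoc
  dd0_locMul := L.dd0_locMul
  locMul_dd0 := L.locMul_dd0
  locLe_refl := L.locLe_refl
  locLe_trans := L.locLe_trans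
  locLe_antisymm := L.locLe_antisymm
  dd0_locLe := L.dd0_locLe
  locMul_mono := L.locMul_mono
  bound := fun {_s} c₁ c₂ =>
    match c₁, c₂ with
    | .inl c₁, .inl c₂ => L.bound c₁ c₂
    | c₁, c₂ => Classical.choose (hM.total (paramInterp M A c₁) (paramInterp M A c₂))

/-- The natural expansion `M_A` of `M` to an `L(A)`-structure. -/
noncomputable def LStructure.withParams {L : LocalLanguage} (M : LStructure L)
    (hM : IsLocal M) (A : ParamSet M) : LStructure (L.withParams M hM A) where
  Dom := M.Dom
  relMap := M.relMap
  constMap := paramInterp M A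

/-- `M` has the local joint property over `A`: any two local models of `Th₋(M/A)` map
into a common local model of `Th₋(M/A)`. -/
def HasLJPOver {L : LocalLanguage} (M : LStructure L) (hM : IsLocal M) (A : ParamSet M) :
    Prop :=
  HasLJP (ThNeg (M.withParams hM A))

/-- `M` is (local positively) κ-saturated: it realizes every local positive type of
`Th₋(M/A)` on `x` whenever `|x| < κ`, `|A| < κ` and `M` has the local joint property
over `A`. -/
def IsSaturatedAt {L : LocalLanguage} (M : LStructure L) (hM : IsLocal M)
    (κ : Cardinal) : Prop :=
  ∀ A : ParamSet M, Cardinal.mk (Σ s : L.Sorts, A s) < κ → HasLJPOver M hM A →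
    ∀ (α : Type) (σ : α → L.Sorts), Cardinal.mk α < κ →
      ∀ Γ : Set (LPosForm (L.withParams M hM A) α σ),
        IsLType (ThNeg (M.withParams hM A)) Γ →
          ∃ v : (a : α) → M.Dom (σ a), ∀ φ ∈ Γ, LPosForm.Realize (M.withParams hM A) φ v

/-- The local positive type of a tuple over a set of parameters `A`, rendered as the set
of local positive formulas with extra free variables for the parameters of `A` that are
satisfied when those variables are evaluated at the parameters themselves. -/
def ltpOver {L : LocalLanguage} (M : LStructure L) (A : ParamSet M) {α : Type}
    {σ : α → L.Sorts} (v : (a : α) → M.Dom (σ a)) :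
    Set (LPosForm L (α ⊕ Σ s : L.Sorts, A s) (Sum.elim σ (fun p => p.1))) :=
  {φ | φ.Realize M (sval v (fun p => p.2.1))}

/-! ## Substructures -/

/-- A substructure of `M`: a family of subsets closed under the constants (the language
is relational). -/
structure Substruct {L : LocalLanguage} (M : LStructure L) where
  carrier : (s : L.Sorts) → Set (M.Dom s)
  const_mem : ∀ {s : L.Sorts} (c : L.Const s), M.constMap c ∈ carrier s

/-- The induced structure on a substructure. -/
def Substruct.toStruct {L : LocalLanguage} {M : LStructure L} (A : Substruct M) :
    LStructure L where
  Dom s := A.carrier s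
  relMap R x := M.relMap R (fun i => (x i).1)
  constMap c := ⟨M.constMap c, A.const_mem c⟩


/-! ## Topologies -/

/-- The `d`-ball at `a`. -/
def LStructure.ball {L : LocalLanguage} (M : LStructure L) {s : L.Sorts} (d : L.Loc s)
    (a : M.Dom s) : Set (M.Dom s) :=
  {b | M.locRel d a b}

/-- The local positive logic topology on a single sort of `M`: closed sets are the
subsets defined by sets of local positive formulas with parameters in `M` (parameters
being rendered as extra free variables evaluated at themselves). -/
def lpTopologyS {L : LocalLanguage} (M : LStructure L) (s : L.Sorts) :
    TopologicalSpace (M.Dom s) :=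
  TopologicalSpace.generateFrom
    {U | ∃ φ : LPosForm L (Unit ⊕ Σ s' : L.Sorts, M.Dom s')
            (Sum.elim (fun _ => s) (fun p => p.1)),
      U = {x | ¬ LPosForm.Realize M φ (sval (fun _ => x) (fun p => p.2))}}

/-- The space of local positive types of `T` on the variable `(α, σ)`. -/
def LTypeSpace (L : LocalLanguage) (T : Set (PosSentence L)) (α : Type)
    (σ : α → L.Sorts) :=
  {Γ : Set (LPosForm L α σ) // IsLType T Γ}

/-- The local positive logic topology on the space of local positive types: generated by
declaring `⟨φ⟩ = {p : φ ∈ p}` closed for every local positive formula `φ`; its closed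
sets are then exactly the sets `⟨Γ⟩` together with `∅`. -/
instance {L : LocalLanguage} (T : Set (PosSentence L)) (α : Type) (σ : α → L.Sorts) :
    TopologicalSpace (LTypeSpace L T α σ) :=
  TopologicalSpace.generateFrom
    {U | ∃ φ : LPosForm L α σ, U = {p : LTypeSpace L T α σ | φ ∉ p.1}}

/-! ## Completeness and compactness -/

/-- `T` is complete: `T = Th₋(M)` for every local positively closed model `M` of `T`. -/
def IsCompleteTheory {L : LocalLanguage} (T : Set (PosSentence L)) : Prop :=
  ∀ M : LStructure L, IsPC M T → ThNeg M = T

/-- `T` is local positively compact. -/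
def IsLocPosCompact {L : LocalLanguage} (T : Set (PosSentence L)) : Prop :=
  ∀ (s : L.Sorts) (γ : Type), Finite γ →
    ∀ (τ : γ → L.Sorts) (φ : LPosForm L (Fin 2 ⊕ γ) (Sum.elim (fun _ => s) τ)),
      (∀ M : LStructure L, LocalModel M T →
        ∀ (a : M.Dom s) (w : (j : γ) → M.Dom (τ j)),
          ¬ LPosForm.Realize M φ (sval ![a, a] w)) →
      ∀ (B : VBound L (Unit ⊕ γ) (Sum.elim (fun _ => s) τ)) (d : L.Loc s),
        ∃ k : ℕ, 0 < k ∧ ∀ M : LStructure L, LocalModel M T →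
          ¬ ∃ (a : Fin k → M.Dom s) (w : (j : γ) → M.Dom (τ j)),
            ∀ i j : Fin k, i ≠ j →
              B.Holds M (sval (fun _ => a i) w) ∧ M.locRel d (a i) (a j) ∧
                LPosForm.Realize M φ (sval ![a i, a j] w)

/-! ## Auxiliary machinery for the proof of Statement 17 -/

section AuxRetractor

variable {L : LocalLanguage}

theorem LTerm.realize_eqRec (M : LStructure L) {α : Type} {σ : α → L.Sorts}
    (v : (a : α) → M.Dom (σ a)) {s s' : L.Sorts} (h : s = s') (t : LTerm L α σ s) :
    (h ▸ t).realize M v = h ▸ (t.realize M v) := by cases h; rfl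

/-- Renaming of terms along a sort-compatible map of contexts. -/
def LTerm.rename {α β : Type} {σ : α → L.Sorts} {τ : β → L.Sorts}
    (r : α → β) (hr : ∀ a, τ (r a) = σ a) : {s : L.Sorts} → LTerm L α σ s → LTerm L β τ s
  | _, .var a => hr a ▸ LTerm.var (r a)
  | _, .const c => .const c

/-- Pullback of a valuation along a sort-compatible map of contexts. -/
def vmap {M : LStructure L} {α β : Type} {σ : α → L.Sorts} {τ : β → L.Sorts}
    (r : α → β) (hr : ∀ a, τ (r a) = σ a) (w : (b : β) → M.Dom (τ b)) (a : α) :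
    M.Dom (σ a) := hr a ▸ w (r a)

theorem vmap_apply {M : LStructure L} {α β : Type} {σ : α → L.Sorts} {τ : β → L.Sorts}
    (r : α → β) (hr : ∀ a, τ (r a) = σ a) (w : (b : β) → M.Dom (τ b)) (a : α)
    (b : β) (hb : r a = b) (e : τ b = σ a) : vmap r hr w a = e ▸ w b := by
  subst hb; rfl

theorem LTerm.realize_rename {M : LStructure L} {α β : Type} {σ : α → L.Sorts}
    {τ : β → L.Sorts} (r : α → β) (hr : ∀ a, τ (r a) = σ a) (w : (b : β) → M.Dom (τ b)) :
    ∀ {s : L.Sorts} (t : LTerm L α σ s),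
      (t.rename r hr).realize M w = t.realize M (vmap r hr w)
  | _, .var a => by
    show ((hr a) ▸ (LTerm.var (r a) : LTerm L β τ _)).realize M w = _
    rw [LTerm.realize_eqRec]; rfl
  | _, .const c => rfl

/-- The sort-compatibility proof for the extension of a renaming to `Option` contexts. -/
def osort_map {α β : Type} {σ : α → L.Sorts} {τ : β → L.Sorts} {s : L.Sorts}
    (r : α → β) (hr : ∀ a, τ (r a) = σ a) :
    ∀ o : Option α, osort s τ (Option.map r o) = osort s σ o
  | none => rfl
  | some a => hr a

/-- Renaming of local positive formulas along a sort-compatible map of contexts. -/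
def LPosForm.rename : {α β : Type} → {σ : α → L.Sorts} → {τ : β → L.Sorts} →
    (r : α → β) → (hr : ∀ a, τ (r a) = σ a) → LPosForm L α σ → LPosForm L β τ
  | _, _, _, _, r, hr, .rel R ts => .rel R fun i => (ts i).rename r hr
  | _, _, _, _, r, hr, .and φ ψ => .and (φ.rename r hr) (ψ.rename r hr)
  | _, _, _, _, r, hr, .or φ ψ => .or (φ.rename r hr) (ψ.rename r hr)
  | _, _, _, _, r, hr, .lex s d t φ =>
      .lex s d (t.rename r hr) (φ.rename (Option.map r) (osort_map r hr))

theorem vmap_vcons {M : LStructure L} {α β : Type} {σ : α → L.Sorts} {τ : β → L.Sorts}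
    {s : L.Sorts} (r : α → β) (hr : ∀ a, τ (r a) = σ a) (x : M.Dom s)
    (w : (b : β) → M.Dom (τ b)) :
    vmap (M := M) (σ := osort s σ) (Option.map r) (osort_map r hr) (vcons x w) =
      vcons x (vmap r hr w) := by
  funext o; cases o <;> rfl

theorem LPosForm.realize_rename (M : LStructure L) :
    ∀ {α β : Type} {σ : α → L.Sorts} {τ : β → L.Sorts} (r : α → β)
      (hr : ∀ a, τ (r a) = σ a) (φ : LPosForm L α σ) (w : (b : β) → M.Dom (τ b)),
      (φ.rename r hr).Realize M w ↔ φ.Realize M (vmap r hr w)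
  | _, _, _, _, r, hr, .rel R ts, w => by
    simp only [LPosForm.rename, LPosForm.Realize]
    exact iff_of_eq (congrArg _ (funext fun i => LTerm.realize_rename r hr w (ts i)))
  | _, _, _, _, r, hr, .and φ ψ, w => by
    simp only [LPosForm.rename, LPosForm.Realize]
    exact and_congr (realize_rename M r hr φ w) (realize_rename M r hr ψ w)
  | _, _, _, _, r, hr, .or φ ψ, w => by
    simp only [LPosForm.rename, LPosForm.Realize]
    exact or_congr (realize_rename M r hr φ w) (realize_rename M r hr ψ w)
  | _, _, _, _, r, hr, .lex s d t φ, w => by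
    simp only [LPosForm.rename, LPosForm.Realize, LTerm.realize_rename]
    exact exists_congr fun x => and_congr Iff.rfl
      (by rw [realize_rename M _ _ φ (vcons x w), vmap_vcons])

theorem realize_tpair (M : LStructure L) {α : Type} {σ : α → L.Sorts} {s t : L.Sorts}
    (t₁ : LTerm L α σ s) (t₂ : LTerm L α σ t) (v : (a : α) → M.Dom (σ a)) :
    (fun i => ((tpair t₁ t₂) i).realize M v) =
      dpair (C := fun i => M.Dom (![s, t] i)) (t₁.realize M v) (t₂.realize M v) := by
  funext i
  match i with
  | ⟨0, _⟩ => rfl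
  | ⟨1, _⟩ => rfl

/-- Translation of local positive formulas into positive formulas. -/
def LPosForm.toPos : {α : Type} → {σ : α → L.Sorts} → LPosForm L α σ → PosForm L α σ
  | _, _, .rel R ts => .rel R ts
  | _, _, .and φ ψ => .and φ.toPos ψ.toPos
  | _, _, .or φ ψ => .or φ.toPos ψ.toPos
  | _, _, .lex s d t φ =>
      .ex s (.and (.rel (L.locToRel d)
        (tpair (.var none) (t.rename some fun _ => rfl))) φ.toPos)

theorem LPosForm.realize_toPos (M : LStructure L) :
    ∀ {α : Type} {σ : α → L.Sorts} (φ : LPosForm L α σ) (v : (a : α) → M.Dom (σ a)),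
      φ.toPos.Realize M v ↔ φ.Realize M v
  | _, _, .rel R ts, v => Iff.rfl
  | _, _, .and φ ψ, v => and_congr (realize_toPos M φ v) (realize_toPos M ψ v)
  | _, _, .or φ ψ, v => or_congr (realize_toPos M φ v) (realize_toPos M ψ v)
  | _, σ, .lex s d t φ, v => by
    simp only [LPosForm.toPos, PosForm.Realize, LPosForm.Realize]
    refine exists_congr fun x => ?_
    erw [realize_tpair, LTerm.realize_rename]
    have hv : vmap (M := M) (σ := σ) some (fun _ => rfl) (vcons x v) = v := rfl
    erw [hv]
    exact and_congr Iff.rfl (realize_toPos M φ (vcons x v))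

/-- Conjunction of a nonempty finite family of local positive formulas. -/
def bigConj {α : Type} {σ : α → L.Sorts} :
    (n : ℕ) → (Fin (n + 1) → LPosForm L α σ) → LPosForm L α σ
  | 0, F => F 0
  | n + 1, F => .and (bigConj n (F ∘ Fin.castSucc)) (F (Fin.last _))

theorem realize_bigConj (M : LStructure L) {α : Type} {σ : α → L.Sorts} :
    ∀ (n : ℕ) (F : Fin (n + 1) → LPosForm L α σ) (v : (a : α) → M.Dom (σ a)),
      (bigConj n F).Realize M v ↔ ∀ j, (F j).Realize M v
  | 0, F, v => by
    simp only [bigConj]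
    exact ⟨fun h j => by rw [Fin.fin_one_eq_zero j]; exact h, fun h => h 0⟩
  | n + 1, F, v => by
    simp only [bigConj, LPosForm.Realize, realize_bigConj M n]
    constructor
    · rintro ⟨h1, h2⟩ j
      rcases Fin.eq_castSucc_or_eq_last j with ⟨i, rfl⟩ | rfl
      · exact h1 i
      · exact h2
    · intro h
      exact ⟨fun i => h _, h _⟩

theorem sigma_pair_fst {ι : Type*} {F G : ι → Type*} {s₁ s₂ : ι}
    {p : F s₁ × G s₁} {q : F s₂ × G s₂}
    (h : (⟨s₁, p⟩ : Σ t, F t × G t) = ⟨s₂, q⟩) (e : s₂ = s₁) : e ▸ q.1 = p.1 := by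
  subst e
  injection h with h1 h2
  exact (congrArg Prod.fst h2).symm

theorem sigma_pair_snd {ι : Type*} {F G : ι → Type*} {s₁ s₂ : ι}
    {p : F s₁ × G s₁} {q : F s₂ × G s₂}
    (h : (⟨s₁, p⟩ : Σ t, F t × G t) = ⟨s₂, q⟩) (e : s₂ = s₁) : e ▸ q.2 = p.2 := by
  subst e
  injection h with h1 h2
  exact (congrArg Prod.snd h2).symm

theorem chain_finite_ub {X : Type*} {c : Set (Set X)} (hchain : IsChain (· ⊆ ·) c)
    (hcne : c.Nonempty) {α : Type} (hfin : Finite α) (G : α → Set X)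
    (hG : ∀ a, G a ∈ c) : ∃ U ∈ c, ∀ a, G a ⊆ U := by
  haveI := hfin
  have main : ∀ t : Set (Set X), t.Finite → t ⊆ c → ∃ U ∈ c, ∀ A ∈ t, A ⊆ U := by
    intro t ht
    refine Set.Finite.induction_on
      (motive := fun t _ => t ⊆ c → ∃ U ∈ c, ∀ A ∈ t, A ⊆ U) t ht ?_ ?_
    · intro _
      obtain ⟨U, hU⟩ := hcne
      exact ⟨U, hU, by simp⟩
    · intro A t hA hfin ih hsub
      obtain ⟨U, hUc, hU⟩ := ih (fun B hB => hsub (Set.mem_insert_of_mem _ hB))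
      have hAc : A ∈ c := hsub (Set.mem_insert _ _)
      rcases eq_or_ne A U with rfl | hne
      · exact ⟨A, hAc, by rintro B (rfl | hB); exacts [le_refl _, hU B hB]⟩
      · rcases hchain hAc hUc hne with hle | hle
        · exact ⟨U, hUc, by rintro B (rfl | hB); exacts [hle, hU B hB]⟩
        · exact ⟨A, hAc, by
            rintro B (rfl | hB); exacts [le_refl _, (hU B hB).trans hle]⟩
  obtain ⟨U, hUc, hU⟩ := main (Set.range G) (Set.finite_range G)
    (by rintro _ ⟨a, rfl⟩; exact hG a)
  exact ⟨U, hUc, fun a => hU _ ⟨a, rfl⟩⟩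

theorem lhom_ext {A B : LStructure L} {h₁ h₂ : LHom A B}
    (h : h₁.toFun = h₂.toFun) : h₁ = h₂ := by
  cases h₁; cases h₂; cases h; rfl

/-- Sets defined by a local positive formula with parameters are closed in the local
positive logic topology. -/
theorem lp_closed (M : LStructure L) (s : L.Sorts) {α : Type} {σ : α → L.Sorts}
    (φ : LPosForm L (Option α) (osort s σ)) (w : (a : α) → M.Dom (σ a)) :
    @IsClosed _ (lpTopologyS M s) {x | φ.Realize M (vcons x w)} := by
  letI := lpTopologyS M s
  let τP : Unit ⊕ (Σ s' : L.Sorts, M.Dom s') → L.Sorts :=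
    Sum.elim (fun _ => s) (fun p => p.1)
  let r : Option α → Unit ⊕ (Σ s' : L.Sorts, M.Dom s') :=
    fun o => o.elim (Sum.inl ()) (fun a => Sum.inr ⟨σ a, w a⟩)
  have hr : ∀ o, τP (r o) = osort s σ o := fun o => by cases o <;> rfl
  constructor
  refine TopologicalSpace.GenerateOpen.basic _ ⟨φ.rename r hr, ?_⟩
  ext x
  simp only [Set.mem_compl_iff, Set.mem_setOf_eq]
  rw [LPosForm.realize_rename M r hr φ,
    show vmap r hr (sval (fun _ => x) (fun p => p.2)) = vcons x w from by
      funext o; cases o <;> rfl]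

end AuxRetractor
/-- A local positively closed model of `T` all of whose balls in
single sorts are compact in the local positive logic topology is a retractor of `T`. -/
theorem pc_with_compact_balls_is_retractor
    {L : LocalLanguage} (T : Set (PosSentence L))
    (hT : IsNegLocalTheory T) (hsat : LocSat T)
    (M : LStructure L) (hM : IsPC M T)
    (hcomp : ∀ (s : L.Sorts) (d : L.Loc s) (a : M.Dom s),
      @IsCompact _ (lpTopologyS M s) (M.ball d a)) :
    IsRetractor T M := by
  classical
  obtain ⟨hMmod, hpc⟩ := hM
  refine ⟨hMmod, ?_⟩
  intro N hN f
  have hMloc : IsLocal M := hMmod.1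
  have hNloc : IsLocal N := hN.1
  have hemb : f.IsPosEmbedding := hpc N f hN
  -- the positive embedding property for local positive formulas
  have hembL : ∀ (α : Type) (σ : α → L.Sorts) (φ : LPosForm L α σ)
      (v : (a : α) → M.Dom (σ a)),
      φ.Realize N (fun a => f.toFun (σ a) (v a)) → φ.Realize M v := fun α σ φ v h =>
    (LPosForm.realize_toPos M φ v).mp
      (hemb α σ φ.toPos v ((LPosForm.realize_toPos N φ (fun a => f.toFun (σ a) (v a))).mpr h))
  -- nonemptiness of sorts of M that are inhabited in N
  have hdomne : ∀ (s : L.Sorts), N.Dom s → Nonempty (M.Dom s) := by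
    intro s b
    have h := hemb Empty (emptySorts L)
      (.ex s (.rel (L.locToRel (L.dd0 s)) (tpair (.var none) (.var none))))
      (fun e => e.elim) ?_
    · obtain ⟨x, -⟩ := h
      exact ⟨x⟩
    · refine ⟨b, ?_⟩
      simp only [PosForm.Realize]
      erw [realize_tpair]
      exact (hNloc.dd0_eq b b).mpr rfl
  -- the Zorn set-up
  let X : Type := Σ t : L.Sorts, N.Dom t × M.Dom t
  let G₀ : Set X := {p | ∃ a : M.Dom p.1, p.2 = (f.toFun p.1 a, a)}
  let Good : Set X → Prop := fun G =>
    ∀ (α : Type), Finite α → ∀ (σ : α → L.Sorts) (v : (a : α) → N.Dom (σ a))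
      (w : (a : α) → M.Dom (σ a)),
      (∀ a, (⟨σ a, (v a, w a)⟩ : X) ∈ G) →
      ∀ φ : LPosForm L α σ, φ.Realize N v → φ.Realize M w
  let S : Set (Set X) := {G | G₀ ⊆ G ∧ Good G}
  have hG₀S : G₀ ∈ S := by
    refine ⟨le_refl _, ?_⟩
    intro α hfin σ v w hmem φ hφ
    have hv : v = fun a => f.toFun (σ a) (w a) := by
      funext a
      obtain ⟨m, hm⟩ := hmem a
      have h1 : v a = f.toFun (σ a) m := congrArg Prod.fst hm
      have h2 : w a = m := congrArg Prod.snd hm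
      rw [h1, h2]
    rw [hv] at hφ
    exact hembL α σ φ w hφ
  have hchainS : ∀ c ⊆ S, IsChain (· ⊆ ·) c → c.Nonempty →
      ∃ ub ∈ S, ∀ G ∈ c, G ⊆ ub := by
    intro c hcS hchain hcne
    refine ⟨⋃₀ c, ⟨?_, ?_⟩, fun G hG => Set.subset_sUnion_of_mem hG⟩
    · obtain ⟨G, hG⟩ := hcne
      exact (hcS hG).1.trans (Set.subset_sUnion_of_mem hG)
    · intro α hfin σ v w hmem φ hφ
      choose Gc hGc hmemc using fun a => Set.mem_sUnion.mp (hmem a)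
      obtain ⟨U, hUc, hU⟩ := chain_finite_ub hchain hcne hfin Gc hGc
      exact (hcS hUc).2 α hfin σ v w (fun a => hU a (hmemc a)) φ hφ
  obtain ⟨Gm, hsub0, hmax⟩ := zorn_subset_nonempty S hchainS G₀ hG₀S
  have hGood : Good Gm := hmax.1.2
  -- totality of the maximal correspondence
  have htotal : ∀ (s : L.Sorts) (b : N.Dom s), ∃ x : M.Dom s,
      (⟨s, (b, x)⟩ : X) ∈ Gm := by
    intro s b
    by_contra hball
    push_neg at hball
    obtain ⟨m₀⟩ := hdomne s b
    obtain ⟨d, hd⟩ := hNloc.total b (f.toFun s m₀)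
    letI := lpTopologyS M s
    let I : Type 1 := Σ' (α : Type) (_ : Finite α) (σ : α → L.Sorts)
      (_ : LPosForm L (Option α) (osort s σ)), (a : α) → N.Dom (σ a) × M.Dom (σ a)
    let Cond : I → Prop := fun i =>
      (∀ a, (⟨i.2.2.1 a, i.2.2.2.2 a⟩ : X) ∈ Gm) ∧
        i.2.2.2.1.Realize N (vcons b (fun a => (i.2.2.2.2 a).1))
    let C : I → Set (M.Dom s) := fun i =>
      {x | Cond i → i.2.2.2.1.Realize M (vcons x (fun a => (i.2.2.2.2 a).2))}
    have hCclosed : ∀ i : I, IsClosed (C i) := by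
      intro i
      by_cases h : Cond i
      · have hCi : C i = {x | i.2.2.2.1.Realize M (vcons x (fun a => (i.2.2.2.2 a).2))} := by
          ext x
          exact ⟨fun hx => hx h, fun hx _ => hx⟩
        rw [hCi]
        exact lp_closed M s _ _
      · have hCi : C i = Set.univ := by
          ext x
          exact ⟨fun _ => trivial, fun _ hc => absurd hc h⟩
        rw [hCi]
        exact isClosed_univ
    have hm₀ball : m₀ ∈ M.ball d m₀ :=
      hMloc.mono (L.dd0 s) d (L.dd0_locLe d) m₀ m₀ ((hMloc.dd0_eq m₀ m₀).mpr rfl)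
    have hfip : ∀ u : Finset I, (M.ball d m₀ ∩ ⋂ i ∈ u, C i).Nonempty := by
      intro u
      let l : List I := (u.filter Cond).toList
      have hCondl : ∀ j : Fin l.length, Cond (l.get j) := by
        intro j
        have hmem : l.get j ∈ u.filter Cond := Finset.mem_toList.mp (List.get_mem l j)
        exact (Finset.mem_filter.mp hmem).2
      rcases Nat.eq_zero_or_pos l.length with hlen | hlen
      · refine ⟨m₀, hm₀ball, Set.mem_iInter₂.mpr fun i hi => ?_⟩
        intro hc
        exfalso
        have h1 : i ∈ l := Finset.mem_toList.mpr (Finset.mem_filter.mpr ⟨hi, hc⟩)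
        rw [List.length_eq_zero_iff.mp hlen] at h1
        exact absurd h1 List.not_mem_nil
      · obtain ⟨n, hn⟩ : ∃ n, l.length = n + 1 :=
          ⟨l.length - 1, (Nat.succ_pred_eq_of_pos hlen).symm⟩
        let idx : Fin (n + 1) → Fin l.length := fun j => Fin.cast hn.symm j
        haveI hfinfib : ∀ j : Fin (n + 1), Finite ((l.get (idx j)).1) :=
          fun j => (l.get (idx j)).2.1
        let γ : Type := (j : Fin (n + 1)) × (l.get (idx j)).1
        let β : Type := γ ⊕ Unit
        let σβ : β → L.Sorts :=
          Sum.elim (fun p => (l.get (idx p.1)).2.2.1 p.2) (fun _ => s)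
        let rmap : (j : Fin (n + 1)) → (l.get (idx j)).1 → β := fun j a => Sum.inl ⟨j, a⟩
        have hrmap : ∀ (j : Fin (n + 1)) (a : (l.get (idx j)).1),
            σβ (rmap j a) = (l.get (idx j)).2.2.1 a := fun j a => rfl
        let F : Fin (n + 1) → LPosForm L (Option β) (osort s σβ) := fun j =>
          (l.get (idx j)).2.2.2.1.rename (Option.map (rmap j))
            (osort_map (rmap j) (hrmap j))
        let vβ : (p : β) → N.Dom (σβ p) := fun p =>
          match p with
          | .inl q => ((l.get (idx q.1)).2.2.2.2 q.2).1
          | .inr _ => f.toFun s m₀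
        let wβ : (p : β) → M.Dom (σβ p) := fun p =>
          match p with
          | .inl q => ((l.get (idx q.1)).2.2.2.2 q.2).2
          | .inr _ => m₀
        have hmemβ : ∀ p : β, (⟨σβ p, (vβ p, wβ p)⟩ : X) ∈ Gm := by
          rintro (⟨j, a⟩ | u')
          · exact (hCondl (idx j)).1 a
          · exact hsub0 ⟨m₀, rfl⟩
        let Ψ : LPosForm L β σβ := .lex s d (.var (Sum.inr ())) (bigConj n F)
        have hrealN : Ψ.Realize N vβ := by
          refine ⟨b, hd, ?_⟩
          rw [realize_bigConj N n F (vcons b vβ)]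
          intro j
          refine (LPosForm.realize_rename N (Option.map (rmap j))
            (osort_map (rmap j) (hrmap j)) ((l.get (idx j)).2.2.2.1) (vcons b vβ)).mpr ?_
          have hveq : vmap (Option.map (rmap j)) (osort_map (rmap j) (hrmap j))
              (vcons b vβ) = vcons b (fun a => ((l.get (idx j)).2.2.2.2 a).1) := by
            funext o; cases o <;> rfl
          rw [hveq]
          exact (hCondl (idx j)).2
        have hrealM : Ψ.Realize M wβ := hGood β inferInstance σβ vβ wβ hmemβ Ψ hrealN
        obtain ⟨x, hx1, hx2⟩ := hrealM
        have hx2' := (realize_bigConj M n F (vcons x wβ)).mp hx2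
        refine ⟨x, hMloc.symm d x m₀ hx1, Set.mem_iInter₂.mpr fun i hiu => ?_⟩
        intro hci
        have hil : i ∈ l := Finset.mem_toList.mpr (Finset.mem_filter.mpr ⟨hiu, hci⟩)
        obtain ⟨j0, hj0⟩ := List.get_of_mem hil
        have hj : l.get (idx (Fin.cast hn j0)) = i := hj0
        subst hj
        have hx2'' := (LPosForm.realize_rename M (Option.map (rmap (Fin.cast hn j0)))
          (osort_map (rmap (Fin.cast hn j0)) (hrmap (Fin.cast hn j0)))
          ((l.get (idx (Fin.cast hn j0))).2.2.2.1) (vcons x wβ)).mp (hx2' (Fin.cast hn j0))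
        have hweq : vmap (Option.map (rmap (Fin.cast hn j0)))
            (osort_map (rmap (Fin.cast hn j0)) (hrmap (Fin.cast hn j0))) (vcons x wβ) =
            vcons x (fun a => ((l.get (idx (Fin.cast hn j0))).2.2.2.2 a).2) := by
          funext o; cases o <;> rfl
        rw [hweq] at hx2''
        exact hx2''
    obtain ⟨x, hxball, hxint⟩ := (hcomp s d m₀).inter_iInter_nonempty C hCclosed hfip
    -- extend the maximal element, contradiction
    have hG'S : insert (⟨s, (b, x)⟩ : X) Gm ∈ S := by
      refine ⟨hsub0.trans (Set.subset_insert _ _), ?_⟩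
      intro α hfin σ v w hmem φ hφ
      haveI := hfin
      let P : α → Prop := fun a => (⟨σ a, (v a, w a)⟩ : X) ∈ Gm
      have hkey : ∀ a, ¬ P a → (⟨σ a, (v a, w a)⟩ : X) = ⟨s, (b, x)⟩ := fun a hna =>
        ((Set.mem_insert_iff.mp (hmem a)).resolve_right hna)
      let r : α → Option {a // P a} := fun a => if h : P a then some ⟨a, h⟩ else none
      have hr : ∀ a, osort s (fun p : {a // P a} => σ p.1) (r a) = σ a := by
        intro a
        show osort s (fun p : {a // P a} => σ p.1)
          (if h : P a then some ⟨a, h⟩ else none) = σ a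
        by_cases h : P a
        · rw [dif_pos h]
          rfl
        · rw [dif_neg h]
          exact (congrArg Sigma.fst (hkey a h)).symm
      let i₁ : I := ⟨{a // P a}, inferInstance, fun p => σ p.1, φ.rename r hr,
        fun p => (v p.1, w p.1)⟩
      have hcond : Cond i₁ := by
        refine ⟨fun p => p.2, ?_⟩
        show (φ.rename r hr).Realize N (vcons b (fun p : {a // P a} => v p.1))
        rw [LPosForm.realize_rename N r hr φ]
        have hveq : vmap r hr (vcons b (fun p : {a // P a} => v p.1)) = v := by
          funext a
          by_cases h : P a
          · exact vmap_apply r hr _ a (some ⟨a, h⟩) (dif_pos h) rfl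
          · exact (vmap_apply r hr _ a none (dif_neg h)
              ((congrArg Sigma.fst (hkey a h)).symm)).trans
              (sigma_pair_fst (hkey a h) ((congrArg Sigma.fst (hkey a h)).symm))
        rw [hveq]
        exact hφ
      have hxC : x ∈ C i₁ := Set.mem_iInter.mp hxint i₁
      have hreal : (φ.rename r hr).Realize M
          (vcons x (fun p : {a // P a} => w p.1)) := hxC hcond
      rw [LPosForm.realize_rename M r hr φ] at hreal
      have hweq : vmap r hr (vcons x (fun p : {a // P a} => w p.1)) = w := by
        funext a
        by_cases h : P a
        · exact vmap_apply r hr _ a (some ⟨a, h⟩) (dif_pos h) rfl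
        · exact (vmap_apply r hr _ a none (dif_neg h)
            ((congrArg Sigma.fst (hkey a h)).symm)).trans
            (sigma_pair_snd (hkey a h) ((congrArg Sigma.fst (hkey a h)).symm))
      rw [hweq] at hreal
      exact hreal
    exact hball x (hmax.2 hG'S (Set.subset_insert _ _) (Set.mem_insert _ _))
  -- assemble the retraction
  choose g hg using htotal
  have hfun3 : ∀ (s : L.Sorts) (bb : N.Dom s) (y : M.Dom s),
      (⟨s, (bb, y)⟩ : X) ∈ Gm → g s bb = y := by
    intro s bb y hy
    have hmem : ∀ i : Fin 2,
        (⟨s, ((fun _ : Fin 2 => bb) i,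
          dpair (C := fun _ => M.Dom s) (g s bb) y i)⟩ : X) ∈ Gm := by
      intro i
      match i with
      | ⟨0, _⟩ => exact hg s bb
      | ⟨1, _⟩ => exact hy
    have hres := hGood (Fin 2) inferInstance (fun _ => s) (fun _ => bb)
      (dpair (C := fun _ => M.Dom s) (g s bb) y) hmem
      (.rel (L.locToRel (L.dd0 s)) (tpair (.var 0) (.var 1))) ?_
    · simp only [LPosForm.Realize] at hres
      rw [realize_tpair] at hres
      exact (hMloc.dd0_eq (g s bb) y).mp hres
    · simp only [LPosForm.Realize]
      rw [realize_tpair]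
      exact (hNloc.dd0_eq bb bb).mpr rfl
  refine ⟨⟨g, ?_, ?_⟩, ?_⟩
  · intro n ρ R y hy
    exact hGood (Fin n) inferInstance ρ y (fun i => g (ρ i) (y i)) (fun i => hg _ _)
      (.rel R (fun i => .var i)) hy
  · intro s c
    exact hfun3 s (N.constMap c) (M.constMap c)
      (hsub0 ⟨M.constMap c, by rw [f.map_const]⟩)
  · apply lhom_ext
    funext s a
    show g s (f.toFun s a) = a
    exact hfun3 s (f.toFun s a) a (hsub0 ⟨a, rfl⟩)
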